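/- arXiv:0709.0454 — 8 statements merged into one kernel-verified Lean document; each statement's English description precedes it below -/
import Mathlib

section
/- Let A, B, C be three non-collinear points in the Euclidean plane, with incenter I and excenters E_A, E_B, E_C. Let J be the inversion with center I and radius 1. Then the three points J(E_A), J(E_B), J(E_C) are non-collinear, and the incenter of the triangle with vertices J(E_A), J(E_B), J(E_C) is equal to I. (This is the concrete planar form, via stereographic projection from the first point, of the main theorem: the dual of a dual quadruplet coincides with the original one.) -/
open EuclideanGeometry RealInnerProductSpace

/-- The incenter of the triangle `A B C` in the Euclidean plane, as the affine
combination `(a·A + b·B + c·C)/(a+b+c)` with `a = dist B C`, `b = dist C A`, `c = dist A B`. -/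
noncomputable def incenterPt (A B C : EuclideanSpace ℝ (Fin 2)) : EuclideanSpace ℝ (Fin 2) :=
  (dist B C + dist C A + dist A B)⁻¹ •
    (dist B C • A + dist C A • B + dist A B • C)

/-- The excenter of the triangle `A B C` opposite the first vertex `A`, as the affine
combination `(−a·A + b·B + c·C)/(−a+b+c)`. -/
noncomputable def excenterPt (A B C : EuclideanSpace ℝ (Fin 2)) : EuclideanSpace ℝ (Fin 2) :=
  (-dist B C + dist C A + dist A B)⁻¹ •
    ((-dist B C) • A + dist C A • B + dist A B • C)

private lemma incenterPt_cycle (A B C : EuclideanSpace ℝ (Fin 2)) :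
    incenterPt B C A = incenterPt A B C := by
  unfold incenterPt
  rw [show dist C A + dist A B + dist B C = dist B C + dist C A + dist A B from by ring]
  module

private lemma cycle_indep {A B C : EuclideanSpace ℝ (Fin 2)}
    (h : AffineIndependent ℝ ![A, B, C]) : AffineIndependent ℝ ![B, C, A] := by
  rw [affineIndependent_iff_not_collinear_set] at h ⊢
  intro hc
  exact h (hc.subset fun x hx => by simp at hx ⊢; tauto)

private lemma strict_tri {A B C : EuclideanSpace ℝ (Fin 2)}
    (h : AffineIndependent ℝ ![A, B, C]) : dist B C < dist B A + dist A C := by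
  rcases (dist_triangle B A C).lt_or_eq with h' | h'
  · exact h'
  · exfalso
    have hw : Wbtw ℝ B A C := dist_add_dist_eq_iff.mp h'.symm
    rw [affineIndependent_iff_not_collinear_set] at h
    exact h (hw.collinear.subset fun x hx => by simp at hx ⊢; tauto)

private lemma affineIndependent_homothety (A B C I : EuclideanSpace ℝ (Fin 2)) (k : ℝ)
    (hk : k ≠ 0) (h : AffineIndependent ℝ ![A, B, C]) :
    AffineIndependent ℝ ![I + k • (I - A), I + k • (I - B), I + k • (I - C)] := by
  have finj : Function.Injective
      (AffineMap.homothety I (-k) : EuclideanSpace ℝ (Fin 2) →ᵃ[ℝ] EuclideanSpace ℝ (Fin 2)) := by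
    intro x y hxy
    simp only [AffineMap.homothety_apply, vsub_eq_sub, vadd_eq_add] at hxy
    have h1 : (-k) • (x - I) = (-k) • (y - I) := add_right_cancel hxy
    have h2 : x - I = y - I :=
      smul_right_injective (EuclideanSpace ℝ (Fin 2)) (neg_ne_zero.mpr hk) h1
    exact sub_left_inj.mp h2
  have hcomp : (AffineMap.homothety I (-k) :
        EuclideanSpace ℝ (Fin 2) →ᵃ[ℝ] EuclideanSpace ℝ (Fin 2)) ∘ ![A, B, C]
      = ![I + k • (I - A), I + k • (I - B), I + k • (I - C)] := by
    funext i
    fin_cases i <;>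
      · simp only [Fin.zero_eta, Fin.mk_one, Fin.reduceFinMk, Function.comp_apply,
          Matrix.cons_val_zero, Matrix.cons_val_one, Matrix.head_cons, Matrix.cons_val_two,
          Matrix.tail_cons, AffineMap.homothety_apply, vsub_eq_sub, vadd_eq_add]
        module
  rw [← hcomp]
  exact h.map' _ finj

private lemma incenter_homothety (A B C I : EuclideanSpace ℝ (Fin 2)) (k : ℝ) (hk : 0 < k)
    (ha : 0 < dist B C) (hb : 0 < dist C A) (hc : 0 < dist A B)
    (hI : (dist B C + dist C A + dist A B) • I
        = dist B C • A + dist C A • B + dist A B • C) :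
    incenterPt (I + k • (I - A)) (I + k • (I - B)) (I + k • (I - C)) = I := by
  have d1 : dist (I + k • (I - B)) (I + k • (I - C)) = k * dist B C := by
    rw [dist_eq_norm, show (I + k • (I - B)) - (I + k • (I - C)) = k • (C - B) from by module,
      norm_smul, Real.norm_eq_abs, abs_of_pos hk,
      show ‖C - B‖ = dist B C from by rw [← dist_eq_norm, dist_comm]]
  have d2 : dist (I + k • (I - C)) (I + k • (I - A)) = k * dist C A := by
    rw [dist_eq_norm, show (I + k • (I - C)) - (I + k • (I - A)) = k • (A - C) from by module,
      norm_smul, Real.norm_eq_abs, abs_of_pos hk,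
      show ‖A - C‖ = dist C A from by rw [← dist_eq_norm, dist_comm]]
  have d3 : dist (I + k • (I - A)) (I + k • (I - B)) = k * dist A B := by
    rw [dist_eq_norm, show (I + k • (I - A)) - (I + k • (I - B)) = k • (B - A) from by module,
      norm_smul, Real.norm_eq_abs, abs_of_pos hk,
      show ‖B - A‖ = dist A B from by rw [← dist_eq_norm, dist_comm]]
  have key : (k * dist B C) • (I + k • (I - A)) + (k * dist C A) • (I + k • (I - B))
        + (k * dist A B) • (I + k • (I - C))
      = (k * dist B C + k * dist C A + k * dist A B) • I := by
    have expand : (k * dist B C) • (I + k • (I - A)) + (k * dist C A) • (I + k • (I - B))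
          + (k * dist A B) • (I + k • (I - C))
        = (k + k * k) • ((dist B C + dist C A + dist A B) • I)
          - (k * k) • (dist B C • A + dist C A • B + dist A B • C) := by
      module
    rw [expand, ← hI]
    module
  have hsum : (0:ℝ) < k * dist B C + k * dist C A + k * dist A B := by nlinarith
  unfold incenterPt
  rw [d1, d2, d3, key, smul_smul, inv_mul_cancel₀ hsum.ne', one_smul]

private lemma inversion_excenter (A B C : EuclideanSpace ℝ (Fin 2))
    (h : AffineIndependent ℝ ![A, B, C]) :
    inversion (incenterPt A B C) 1 (excenterPt A B C) =
      incenterPt A B C +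
        ((dist B C + dist C A + dist A B) / (2 * (dist B C * dist C A * dist A B))) •
          (incenterPt A B C - A) := by
  have hBC : B ≠ C := by simpa using h.injective.ne (show (1 : Fin 3) ≠ 2 by decide)
  have hCA : C ≠ A := by simpa using h.injective.ne (show (2 : Fin 3) ≠ 0 by decide)
  have hAB : A ≠ B := by simpa using h.injective.ne (show (0 : Fin 3) ≠ 1 by decide)
  have ha0 : 0 < dist B C := dist_pos.2 hBC
  have hb0 : 0 < dist C A := dist_pos.2 hCA
  have hc0 : 0 < dist A B := dist_pos.2 hAB
  have htri : dist B C < dist C A + dist A B := by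
    have h' := strict_tri h
    rw [dist_comm B A, dist_comm A C] at h'
    linarith
  have hd : 0 < -dist B C + dist C A + dist A B := by linarith
  have hs : 0 < dist B C + dist C A + dist A B := by linarith
  have hBA : ‖B - A‖ = dist A B := by rw [← dist_eq_norm, dist_comm]
  have hCA' : ‖C - A‖ = dist C A := by rw [← dist_eq_norm]
  have hip : ⟪B - A, C - A⟫ = (dist A B ^ 2 + dist C A ^ 2 - dist B C ^ 2) / 2 := by
    have hn := norm_sub_sq_real (B - A) (C - A)
    rw [show (B - A) - (C - A) = B - C from by abel, ← dist_eq_norm, hBA, hCA'] at hn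
    linarith
  have hnorm : ‖dist C A • (B - A) + dist A B • (C - A)‖ ^ 2
      = dist C A * dist A B
        * ((-dist B C + dist C A + dist A B) * (dist B C + dist C A + dist A B)) := by
    rw [norm_add_sq_real, norm_smul, norm_smul, real_inner_smul_left, real_inner_smul_right,
      hip, hBA, hCA', Real.norm_eq_abs, Real.norm_eq_abs, abs_of_pos hb0, abs_of_pos hc0]
    ring
  have hEI : excenterPt A B C - incenterPt A B C
      = (2 * dist B C /
            ((-dist B C + dist C A + dist A B) * (dist B C + dist C A + dist A B))) •
          (dist C A • (B - A) + dist A B • (C - A)) := by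
    unfold excenterPt incenterPt
    match_scalars <;> field_simp <;> ring
  have hIA : incenterPt A B C - A
      = (dist B C + dist C A + dist A B)⁻¹ • (dist C A • (B - A) + dist A B • (C - A)) := by
    unfold incenterPt
    match_scalars <;> field_simp <;> ring
  have hd2 : dist (excenterPt A B C) (incenterPt A B C) ^ 2
      = 4 * dist B C ^ 2 * (dist C A * dist A B)
        / ((-dist B C + dist C A + dist A B) * (dist B C + dist C A + dist A B)) := by
    rw [dist_eq_norm, hEI, norm_smul, mul_pow, Real.norm_eq_abs, sq_abs, hnorm]
    field_simp
    ring
  have hco : (1 / dist (excenterPt A B C) (incenterPt A B C)) ^ 2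
        * (2 * dist B C /
            ((-dist B C + dist C A + dist A B) * (dist B C + dist C A + dist A B)))
      = (dist B C + dist C A + dist A B) / (2 * (dist B C * dist C A * dist A B))
        * (dist B C + dist C A + dist A B)⁻¹ := by
    rw [div_pow, one_pow, hd2]
    field_simp
    ring
  simp only [inversion_def, vsub_eq_sub, vadd_eq_add]
  rw [hEI, hIA, smul_smul, smul_smul, hco]
  exact add_comm _ _

/-- The dual of a dual quadruplet coincides with the original one (planar form):
inverting the three excenters in a circle centered at the incenter `I` yields a
non-degenerate triangle whose incenter is again `I`. -/
theorem double_dual_incenter (A B C : EuclideanSpace ℝ (Fin 2))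
    (h : AffineIndependent ℝ ![A, B, C]) :
    AffineIndependent ℝ
      ![inversion (incenterPt A B C) 1 (excenterPt A B C),
        inversion (incenterPt A B C) 1 (excenterPt B C A),
        inversion (incenterPt A B C) 1 (excenterPt C A B)] ∧
    incenterPt (inversion (incenterPt A B C) 1 (excenterPt A B C))
        (inversion (incenterPt A B C) 1 (excenterPt B C A))
        (inversion (incenterPt A B C) 1 (excenterPt C A B)) =
      incenterPt A B C := by
  have hBCA := cycle_indep h
  have hCAB := cycle_indep hBCA
  have hBC : B ≠ C := by simpa using h.injective.ne (show (1 : Fin 3) ≠ 2 by decide)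
  have hCA : C ≠ A := by simpa using h.injective.ne (show (2 : Fin 3) ≠ 0 by decide)
  have hAB : A ≠ B := by simpa using h.injective.ne (show (0 : Fin 3) ≠ 1 by decide)
  have ha0 : 0 < dist B C := dist_pos.2 hBC
  have hb0 : 0 < dist C A := dist_pos.2 hCA
  have hc0 : 0 < dist A B := dist_pos.2 hAB
  have hs : 0 < dist B C + dist C A + dist A B := by linarith
  have h1 := inversion_excenter A B C h
  have h2 := inversion_excenter B C A hBCA
  have h3 := inversion_excenter C A B hCAB
  rw [incenterPt_cycle,
    show dist C A + dist A B + dist B C = dist B C + dist C A + dist A B from by ring,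
    show 2 * (dist C A * dist A B * dist B C) = 2 * (dist B C * dist C A * dist A B) from by
      ring] at h2
  rw [incenterPt_cycle, incenterPt_cycle,
    show dist A B + dist B C + dist C A = dist B C + dist C A + dist A B from by ring,
    show 2 * (dist A B * dist B C * dist C A) = 2 * (dist B C * dist C A * dist A B) from by
      ring] at h3
  have hk : 0 < (dist B C + dist C A + dist A B) / (2 * (dist B C * dist C A * dist A B)) := by
    apply div_pos hs
    have := mul_pos (mul_pos ha0 hb0) hc0
    linarith
  have hI : (dist B C + dist C A + dist A B) • incenterPt A B C
      = dist B C • A + dist C A • B + dist A B • C := by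
    unfold incenterPt
    rw [smul_smul, mul_inv_cancel₀ hs.ne', one_smul]
  rw [h1, h2, h3]
  exact ⟨affineIndependent_homothety A B C _ _ hk.ne' h,
    incenter_homothety A B C _ _ hk ha0 hb0 hc0 hI⟩
end

section
/- Let A, B, C be three non-collinear points in the Euclidean plane, with incenter I and excenters E_A, E_B, E_C. Let J be the inversion with center I and radius 1. Then J(A) is the excenter of the triangle with vertices J(E_A), J(E_B), J(E_C) opposite the vertex J(E_A). (This is the concrete planar form of the remark that the second point of the double dual returns to the second original point.) -/
open EuclideanGeometry

/-!
Write `a, b, c` for the side lengths and `I` for the incenter. The excenter `E_A` lies on the line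
`AI`, with `E_A - I = -2a/(-a+b+c) • (A - I)`, and `|A - I|² = bc(-a+b+c)/(a+b+c)`. Hence
`J(E_A) - I = -μ • (A - I)` with `μ = (a+b+c)/(2abc)`, and `μ` is symmetric in `a, b, c`: the
triangle `J(E_A) J(E_B) J(E_C)` is the image of `A B C` under the homothety with center `I` and
ratio `-μ`. Excenters commute with homotheties, so the excenter in question is
`I + 2aμ/(-a+b+c) • (A - I)`, and this is `J(A) = I + (A - I)/|A - I|²`.
-/

open AffineMap

theorem dist_homothety_homothety {𝕜 V P : Type*} [NormedField 𝕜] [SeminormedAddCommGroup V]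
    [NormedSpace 𝕜 V] [PseudoMetricSpace P] [NormedAddTorsor V P] (O x y : P) (k : 𝕜) :
    dist (homothety O k x) (homothety O k y) = ‖k‖ * dist x y := by
  simp only [homothety_apply, dist_vadd_cancel_right, dist_smul₀, dist_vsub_cancel_right]

theorem not_collinear_rotate {k V P : Type*} [DivisionRing k] [AddCommGroup V] [Module k V]
    [AddTorsor V P] {A B C : P} (h : ¬Collinear k ({A, B, C} : Set P)) :
    ¬Collinear k ({B, C, A} : Set P) := by
  rwa [Set.pair_comm, Set.insert_comm B A]

theorem neg_dist_add_dist_add_dist_pos {V P : Type*} [NormedAddCommGroup V] [NormedSpace ℝ V]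
    [StrictConvexSpace ℝ V] [MetricSpace P] [NormedAddTorsor V P] {A B C : P}
    (h : ¬Collinear ℝ ({A, B, C} : Set P)) :
    0 < -dist B C + dist C A + dist A B := by
  have hlt : dist B C < dist B A + dist A C :=
    dist_lt_dist_add_dist_iff.2 fun hw => h (by simpa [Set.insert_comm] using hw.collinear)
  rw [dist_comm B A, dist_comm A C] at hlt
  linarith

section Inversion

variable {V P : Type*} [NormedAddCommGroup V] [InnerProductSpace ℝ V] [MetricSpace P]
  [NormedAddTorsor V P]

theorem inversion_homothety (O x : P) (R k : ℝ) :
    inversion O R (homothety O k x) = homothety O (R ^ 2 / (k * dist x O ^ 2)) x := by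
  rw [inversion_eq_lineMap, ← homothety_eq_lineMap, ← homothety_mul_apply, dist_homothety_center,
    dist_comm, Real.norm_eq_abs, div_pow, mul_pow, sq_abs]
  rcases eq_or_ne k 0 with rfl | hk
  · simp
  · congr 1
    field_simp

theorem inversion_eq_homothety (O x : P) (R : ℝ) :
    inversion O R x = homothety O (R ^ 2 / dist x O ^ 2) x := by
  simpa using inversion_homothety O x R 1

end Inversion

section Triangle

variable (A B C : EuclideanSpace ℝ (Fin 2))

theorem incenterPt_rotate : incenterPt B C A = incenterPt A B C := by
  simp only [incenterPt]
  match_scalars <;> ring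

theorem excenterPt_homothety (O : EuclideanSpace ℝ (Fin 2)) {k : ℝ} (hk : k ≠ 0)
    (hA : -dist B C + dist C A + dist A B ≠ 0) :
    excenterPt (homothety O k A) (homothety O k B) (homothety O k C) =
      homothety O k (excenterPt A B C) := by
  have hk' : |k| ≠ 0 := abs_ne_zero.2 hk
  simp only [excenterPt, dist_homothety_homothety, Real.norm_eq_abs]
  simp only [homothety_apply, vsub_eq_sub, vadd_eq_add]
  match_scalars <;> field_simp

theorem excenterPt_eq_homothety (hs : dist B C + dist C A + dist A B ≠ 0)
    (hA : -dist B C + dist C A + dist A B ≠ 0) :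
    excenterPt A B C =
      homothety (incenterPt A B C) (-(2 * dist B C) / (-dist B C + dist C A + dist A B)) A := by
  rw [excenterPt, homothety_apply, incenterPt, vsub_eq_sub, vadd_eq_add]
  match_scalars <;> field_simp <;> ring

theorem dist_incenterPt_sq (hs : dist B C + dist C A + dist A B ≠ 0) :
    dist A (incenterPt A B C) ^ 2 =
      dist C A * dist A B * (-dist B C + dist C A + dist A B) /
        (dist B C + dist C A + dist A B) := by
  have hsub : A - incenterPt A B C = (dist B C + dist C A + dist A B)⁻¹ •
      (dist C A • (A - B) + dist A B • (A - C)) := by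
    rw [incenterPt]
    match_scalars <;> field_simp
    ring
  have hinner : inner ℝ (A - B) (A - C) = (dist A B ^ 2 + dist C A ^ 2 - dist B C ^ 2) / 2 := by
    rw [real_inner_eq_norm_mul_self_add_norm_mul_self_sub_norm_sub_mul_self_div_two,
      sub_sub_sub_cancel_left, ← dist_eq_norm, ← dist_eq_norm, ← dist_eq_norm, dist_comm A C,
      dist_comm C B]
    ring
  rw [dist_eq_norm, hsub, norm_smul, mul_pow, norm_add_sq_real, norm_smul, norm_smul,
    real_inner_smul_left, real_inner_smul_right, hinner, ← dist_eq_norm, ← dist_eq_norm,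
    dist_comm A C]
  simp only [Real.norm_eq_abs, mul_pow, sq_abs, abs_inv, inv_pow]
  field_simp
  ring

theorem inversion_incenterPt_excenterPt (ha : 0 < dist B C) (hb : 0 < dist C A)
    (hc : 0 < dist A B) (hA : 0 < -dist B C + dist C A + dist A B) :
    inversion (incenterPt A B C) 1 (excenterPt A B C) =
      homothety (incenterPt A B C)
        (-((dist B C + dist C A + dist A B) / (2 * (dist B C * dist C A * dist A B)))) A := by
  have hs : 0 < dist B C + dist C A + dist A B := by positivity
  rw [excenterPt_eq_homothety A B C hs.ne' hA.ne', inversion_homothety,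
    dist_incenterPt_sq A B C hs.ne']
  congr 1
  field_simp

end Triangle

/-- Planar form of the remark that the second point of the double dual returns to
the second original point: `J(A)` is the excenter of the triangle
`J(E_A) J(E_B) J(E_C)` opposite `J(E_A)`, where `J` is inversion in the unit circle
centered at the incenter `I`. -/
theorem double_dual_second_point (A B C : EuclideanSpace ℝ (Fin 2))
    (h : AffineIndependent ℝ ![A, B, C]) :
    inversion (incenterPt A B C) 1 A =
      excenterPt (inversion (incenterPt A B C) 1 (excenterPt A B C))
        (inversion (incenterPt A B C) 1 (excenterPt B C A))
        (inversion (incenterPt A B C) 1 (excenterPt C A B)) := by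
  have hABC := affineIndependent_iff_not_collinear_set.1 h
  have hBCA := not_collinear_rotate hABC
  have hA := neg_dist_add_dist_add_dist_pos hABC
  have hB := neg_dist_add_dist_add_dist_pos hBCA
  have hC := neg_dist_add_dist_add_dist_pos (not_collinear_rotate hBCA)
  have ha : 0 < dist B C := by linarith
  have hb : 0 < dist C A := by linarith
  have hc : 0 < dist A B := by linarith
  have hJB := inversion_incenterPt_excenterPt B C A hb hc ha hB
  have hJC := inversion_incenterPt_excenterPt C A B hc ha hb hC
  rw [incenterPt_rotate, ← add_rotate, ← mul_rotate] at hJB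
  rw [← incenterPt_rotate C A B, add_rotate, mul_rotate] at hJC
  set μ := (dist B C + dist C A + dist A B) / (2 * (dist B C * dist C A * dist A B)) with hμ
  have hμ_pos : 0 < μ := by positivity
  rw [inversion_incenterPt_excenterPt A B C ha hb hc hA, hJB, hJC,
    excenterPt_homothety A B C _ (neg_ne_zero.2 hμ_pos.ne') hA.ne',
    excenterPt_eq_homothety A B C (by positivity) hA.ne', ← homothety_mul_apply,
    inversion_eq_homothety, dist_incenterPt_sq A B C (by positivity)]
  congr 1
  rw [hμ]
  field_simp
end

section
/- Let A, B, C be three complex numbers that are not collinear (affinely independent over ℝ), with incenter I and excenters E_A, E_B, E_C (all complex numbers). Then ((E_A − I)/(E_A − E_C)) · ((E_B − E_C)/(E_B − I)) = conj((B − C)/(A − C)). (This is the concrete form, after a Möbius transformation sending the first point to ∞, of the theorem that the cross ratio of the dual quadruplet equals the complex conjugate of the cross ratio of the original quadruplet.) -/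
/-- The incenter of the triangle with vertices `A B C : ℂ`, as the affine combination
`(a·A + b·B + c·C)/(a+b+c)` with `a = dist B C`, `b = dist C A`, `c = dist A B`. -/
noncomputable def incenterC (A B C : ℂ) : ℂ :=
  ((dist B C : ℂ) * A + (dist C A : ℂ) * B + (dist A B : ℂ) * C) /
    ((dist B C + dist C A + dist A B : ℝ) : ℂ)

/-- The excenter of the triangle with vertices `A B C : ℂ` opposite the first vertex. -/
noncomputable def excenterC (A B C : ℂ) : ℂ :=
  ((-(dist B C) : ℂ) * A + (dist C A : ℂ) * B + (dist A B : ℂ) * C) /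
    ((-(dist B C) + dist C A + dist A B : ℝ) : ℂ)

set_option maxHeartbeats 1000000

private lemma frac_div {K : Type*} [Field K] (n1 d1 n2 d2 : K) :
    (n1 / d1) / (n2 / d2) = (n1 * d2) / (n2 * d1) := by
  rw [div_div_eq_mul_div, div_mul_eq_mul_div, div_div, mul_comm d1 n2]

/-- The cross ratio of the dual quadruplet `(I, E_A, E_B, E_C)` equals the complex
conjugate of the cross ratio of `(∞, A, B, C)`. -/
theorem cross_ratio_dual_conj (A B C : ℂ) (h : AffineIndependent ℝ ![A, B, C]) :
    (excenterC A B C - incenterC A B C) / (excenterC A B C - excenterC C A B) *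
      ((excenterC B C A - excenterC C A B) / (excenterC B C A - incenterC A B C)) =
    (starRingEnd ℂ) ((B - C) / (A - C)) := by
  have hAB : A ≠ B := by
    have := h.injective.ne (show (0:Fin 3) ≠ 1 by decide); simpa using this
  have hBC : B ≠ C := by
    have := h.injective.ne (show (1:Fin 3) ≠ 2 by decide); simpa using this
  have hAC : A ≠ C := by
    have := h.injective.ne (show (0:Fin 3) ≠ 2 by decide); simpa using this
  -- the key non-collinearity fact
  have hK : (starRingEnd ℂ) (B - C) * (A - B) ≠ (B - C) * (starRingEnd ℂ) (A - B) := by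
    intro heq
    have hu0 : B - C ≠ 0 := sub_ne_zero.mpr hBC
    have hreal : ((((starRingEnd ℂ) (B-C) * (A-B)).re : ℝ) : ℂ)
        = (starRingEnd ℂ) (B-C) * (A-B) :=
      Complex.conj_eq_iff_re.mp (by rw [map_mul, Complex.conj_conj]; exact heq.symm)
    set t : ℝ := ((starRingEnd ℂ) (B-C) * (A-B)).re / Complex.normSq (B-C) with ht
    have hnz : Complex.normSq (B-C) ≠ 0 := by simpa using hu0
    have hwt : A - B = (t : ℂ) * (B - C) := by
      rw [ht, Complex.ofReal_div, div_mul_eq_mul_div, eq_comm,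
        div_eq_iff (by exact_mod_cast hnz)]
      rw [hreal, ← Complex.mul_conj]
      ring
    have h3 := affineIndependent_iff.mp h Finset.univ ![1, -1 - t, t] ?_ ?_ 0 (Finset.mem_univ 0)
    · simp at h3
    · simp [Fin.sum_univ_three]; ring
    · simp [Fin.sum_univ_three, Complex.real_smul]
      linear_combination hwt
  -- strict triangle inequalities (as nonvanishing)
  have hsAr : -(dist B C) + dist C A + dist A B ≠ 0 := by
    intro h0
    have htri : dist B A + dist A C = dist B C := by
      rw [dist_comm B A, dist_comm A C]; linarith
    have hw : Wbtw ℝ B A C := dist_add_dist_eq_iff.mp htri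
    obtain ⟨p, q, hp, hq, hpq, hE⟩ := mem_segment_iff_wbtw.mpr hw
    rw [Complex.real_smul, Complex.real_smul] at hE
    have hq' : (p:ℂ) = 1 - q := by
      have h : (p:ℝ) = 1 - q := by linarith
      exact_mod_cast congrArg (Complex.ofReal) h
    have e : A - B = -(q:ℂ) * (B - C) := by linear_combination -hE + B * hq'
    have e2 : (starRingEnd ℂ) (A - B) = -(q:ℂ) * ((starRingEnd ℂ) (B - C)) := by
      have h2 := congrArg (starRingEnd ℂ) e
      simpa [map_mul, Complex.conj_ofReal] using h2
    exact hK (by linear_combination (starRingEnd ℂ) (B - C) * e - (B - C) * e2)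
  have hsBr : -(dist C A) + dist A B + dist B C ≠ 0 := by
    intro h0
    have htri : dist C B + dist B A = dist C A := by
      rw [dist_comm C B, dist_comm B A]; linarith
    have hw : Wbtw ℝ C B A := dist_add_dist_eq_iff.mp htri
    obtain ⟨p, q, hp, hq, hpq, hE⟩ := mem_segment_iff_wbtw.mpr hw
    rw [Complex.real_smul, Complex.real_smul] at hE
    have hq' : (p:ℂ) = 1 - q := by
      have h : (p:ℝ) = 1 - q := by linarith
      exact_mod_cast congrArg (Complex.ofReal) h
    have e : B - C = (q:ℂ) * ((A - B) + (B - C)) := by linear_combination -hE + C * hq'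
    have e2 : (starRingEnd ℂ) (B - C)
        = (q:ℂ) * ((starRingEnd ℂ) (A - B) + (starRingEnd ℂ) (B - C)) := by
      have h2 := congrArg (starRingEnd ℂ) e
      simpa [map_mul, map_add, Complex.conj_ofReal] using h2
    rcases eq_or_ne q 1 with h1 | h1
    · have hw0 : A - B = 0 := by
        rw [h1] at e; push_cast at e; linear_combination -e
      exact hK (by rw [hw0]; simp)
    · apply hK
      have key : ((1:ℂ) - q) *
          ((starRingEnd ℂ) (B - C) * (A - B) - (B - C) * (starRingEnd ℂ) (A - B)) = 0 := by
        linear_combination (A - B) * e2 - ((starRingEnd ℂ) (A - B)) * e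
      rcases mul_eq_zero.mp key with hh | hh
      · exfalso
        apply h1
        have : ((q:ℂ)) = 1 := by linear_combination -hh
        exact_mod_cast this
      · exact sub_eq_zero.mp hh
  have hsCr : -(dist A B) + dist B C + dist C A ≠ 0 := by
    intro h0
    have htri : dist A C + dist C B = dist A B := by
      rw [dist_comm A C, dist_comm C B]; linarith
    have hw : Wbtw ℝ A C B := dist_add_dist_eq_iff.mp htri
    obtain ⟨p, q, hp, hq, hpq, hE⟩ := mem_segment_iff_wbtw.mpr hw
    rw [Complex.real_smul, Complex.real_smul] at hE
    have hq' : (p:ℂ) = 1 - q := by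
      have h : (p:ℝ) = 1 - q := by linarith
      exact_mod_cast congrArg (Complex.ofReal) h
    have e : B - C = -(p:ℂ) * (A - B) := by linear_combination hE - B * hq'
    have e2 : (starRingEnd ℂ) (B - C) = -(p:ℂ) * ((starRingEnd ℂ) (A - B)) := by
      have h2 := congrArg (starRingEnd ℂ) e
      simpa [map_mul, Complex.conj_ofReal] using h2
    exact hK (by linear_combination (A - B) * e2 - (starRingEnd ℂ) (A - B) * e)
  -- name the distances
  obtain ⟨a, ha⟩ : ∃ x, dist B C = x := ⟨_, rfl⟩
  obtain ⟨b, hb⟩ : ∃ x, dist C A = x := ⟨_, rfl⟩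
  obtain ⟨c, hc⟩ : ∃ x, dist A B = x := ⟨_, rfl⟩
  have hane : a ≠ 0 := ha ▸ dist_ne_zero.mpr hBC
  have hbne : b ≠ 0 := hb ▸ dist_ne_zero.mpr (Ne.symm hAC)
  have hcne : c ≠ 0 := hc ▸ dist_ne_zero.mpr hAB
  have hapos : 0 ≤ a := ha ▸ dist_nonneg
  have hbpos : 0 ≤ b := hb ▸ dist_nonneg
  have hcpos : 0 ≤ c := hc ▸ dist_nonneg
  rw [ha, hb, hc] at hsAr hsBr hsCr
  -- complex versions of the nonvanishing statements
  have hsA' : -(a:ℂ) + b + c ≠ 0 := by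
    intro hh; apply hsAr
    exact_mod_cast (show ((-a + b + c : ℝ):ℂ) = 0 by push_cast; linear_combination hh)
  have hsB' : -(b:ℂ) + c + a ≠ 0 := by
    intro hh; apply hsBr
    exact_mod_cast (show ((-b + c + a : ℝ):ℂ) = 0 by push_cast; linear_combination hh)
  have hsC' : -(c:ℂ) + a + b ≠ 0 := by
    intro hh; apply hsCr
    exact_mod_cast (show ((-c + a + b : ℝ):ℂ) = 0 by push_cast; linear_combination hh)
  have hs' : (a:ℂ) + b + c ≠ 0 := by
    have hpos : 0 < a := lt_of_le_of_ne hapos (Ne.symm hane)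
    intro hh
    have h2 : (a + b + c : ℝ) = 0 := by
      exact_mod_cast (show ((a + b + c : ℝ):ℂ) = 0 by push_cast; linear_combination hh)
    linarith
  have haC : (a:ℂ) ≠ 0 := Complex.ofReal_ne_zero.mpr hane
  have hbC : (b:ℂ) ≠ 0 := Complex.ofReal_ne_zero.mpr hbne
  have hCA0 : C - A ≠ 0 := sub_ne_zero.mpr (Ne.symm hAC)
  have hd1 : (a:ℂ)*(A-B) + (c:ℂ)*(B-C) ≠ 0 := by
    intro h0
    have h0' := congrArg (starRingEnd ℂ) h0
    simp only [map_add, map_sub, map_mul, Complex.conj_ofReal, map_zero] at h0'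
    have key : ((a:ℝ):ℂ) *
        (((starRingEnd ℂ) B - (starRingEnd ℂ) C) * (A - B)
          - (B - C) * ((starRingEnd ℂ) A - (starRingEnd ℂ) B)) = 0 := by
      linear_combination ((starRingEnd ℂ) B - (starRingEnd ℂ) C) * h0 - (B - C) * h0'
    rcases mul_eq_zero.mp key with hh | hh
    · exact haC hh
    · apply hK
      have expand : (starRingEnd ℂ) (B - C) * (A - B) - (B - C) * (starRingEnd ℂ) (A - B)
          = ((starRingEnd ℂ) B - (starRingEnd ℂ) C) * (A - B)
            - (B - C) * ((starRingEnd ℂ) A - (starRingEnd ℂ) B) := by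
        simp only [map_sub]
      exact sub_eq_zero.mp (by rw [expand]; exact hh)
  have hd2 : (a:ℂ)*(A-B) - (c:ℂ)*(B-C) ≠ 0 := by
    intro h0
    have h0' := congrArg (starRingEnd ℂ) h0
    simp only [map_add, map_sub, map_mul, Complex.conj_ofReal, map_zero] at h0'
    have key : ((a:ℝ):ℂ) *
        (((starRingEnd ℂ) B - (starRingEnd ℂ) C) * (A - B)
          - (B - C) * ((starRingEnd ℂ) A - (starRingEnd ℂ) B)) = 0 := by
      linear_combination ((starRingEnd ℂ) B - (starRingEnd ℂ) C) * h0 - (B - C) * h0'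
    rcases mul_eq_zero.mp key with hh | hh
    · exact haC hh
    · apply hK
      have expand : (starRingEnd ℂ) (B - C) * (A - B) - (B - C) * (starRingEnd ℂ) (A - B)
          = ((starRingEnd ℂ) B - (starRingEnd ℂ) C) * (A - B)
            - (B - C) * ((starRingEnd ℂ) A - (starRingEnd ℂ) B) := by
        simp only [map_sub]
      exact sub_eq_zero.mp (by rw [expand]; exact hh)
  -- squared distances
  have ha2 : ((a:ℝ):ℂ)^2 = (B-C) * (starRingEnd ℂ) (B-C) := by
    rw [← ha, Complex.dist_eq, ← Complex.ofReal_pow, Complex.sq_norm, Complex.mul_conj]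
  have hb2 : ((b:ℝ):ℂ)^2 = (C-A) * (starRingEnd ℂ) (C-A) := by
    rw [← hb, Complex.dist_eq, ← Complex.ofReal_pow, Complex.sq_norm, Complex.mul_conj]
  have hc2 : ((c:ℝ):ℂ)^2 = (A-B) * (starRingEnd ℂ) (A-B) := by
    rw [← hc, Complex.dist_eq, ← Complex.ofReal_pow, Complex.sq_norm, Complex.mul_conj]
  -- the four differences
  have e1 : excenterC A B C - incenterC A B C
      = 2*(a:ℂ)*((c:ℂ)*(C-A) - (b:ℂ)*(A-B)) / ((-(a:ℂ)+b+c) * ((a:ℂ)+b+c)) := by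
    simp only [excenterC, incenterC, ha, hb, hc]
    push_cast
    field_simp
    ring
  have e2 : excenterC A B C - excenterC C A B
      = (-2*(b:ℂ)) * ((a:ℂ)*(A-B) + (c:ℂ)*(B-C)) / ((-(a:ℂ)+b+c) * (-(c:ℂ)+a+b)) := by
    simp only [excenterC, incenterC, ha, hb, hc]
    push_cast
    field_simp
    ring
  have e3 : excenterC B C A - excenterC C A B
      = 2*(a:ℂ)*((b:ℂ)*(A-B) + (c:ℂ)*(C-A)) / ((-(b:ℂ)+c+a) * (-(c:ℂ)+a+b)) := by
    simp only [excenterC, incenterC, ha, hb, hc]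
    push_cast
    field_simp
    ring
  have e4 : excenterC B C A - incenterC A B C
      = 2*(b:ℂ)*((a:ℂ)*(A-B) - (c:ℂ)*(B-C)) / ((-(b:ℂ)+c+a) * ((a:ℂ)+b+c)) := by
    simp only [excenterC, incenterC, ha, hb, hc]
    push_cast
    field_simp
    ring
  have hDen : (c:ℂ)^2*(B-C)^2 - (a:ℂ)^2*(A-B)^2 ≠ 0 := by
    have factored : (c:ℂ)^2*(B-C)^2 - (a:ℂ)^2*(A-B)^2
        = -(((a:ℂ)*(A-B) + (c:ℂ)*(B-C)) * ((a:ℂ)*(A-B) - (c:ℂ)*(B-C))) := by ring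
    rw [factored]
    exact neg_ne_zero.mpr (mul_ne_zero hd1 hd2)
  have hD1 : (-(a:ℂ)+b+c) * ((a:ℂ)+b+c) ≠ 0 := mul_ne_zero hsA' hs'
  have hD2 : (-(a:ℂ)+b+c) * (-(c:ℂ)+a+b) ≠ 0 := mul_ne_zero hsA' hsC'
  have hD3 : (-(b:ℂ)+c+a) * (-(c:ℂ)+a+b) ≠ 0 := mul_ne_zero hsB' hsC'
  have hD4 : (-(b:ℂ)+c+a) * ((a:ℂ)+b+c) ≠ 0 := mul_ne_zero hsB' hs'
  have hN2 : -2*(b:ℂ) * ((a:ℂ)*(A-B) + (c:ℂ)*(B-C)) ≠ 0 :=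
    mul_ne_zero (by simpa using hbC) hd1
  have hN4 : 2*(b:ℂ) * ((a:ℂ)*(A-B) - (c:ℂ)*(B-C)) ≠ 0 :=
    mul_ne_zero (by simpa using hbC) hd2
  rw [e1, e2, e3, e4, frac_div _ _ _ _, frac_div _ _ _ _,
    div_mul_div_comm]
  trans ((a:ℂ)^2*((c:ℂ)^2*(C-A)^2 - (b:ℂ)^2*(A-B)^2)) /
      ((b:ℂ)^2*((c:ℂ)^2*(B-C)^2 - (a:ℂ)^2*(A-B)^2))
  · have hN2 : -2*(b:ℂ) * ((a:ℂ)*(A-B) + (c:ℂ)*(B-C)) ≠ 0 := by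
      exact mul_ne_zero (by simpa using hbC) hd1
    have hN4 : 2*(b:ℂ) * ((a:ℂ)*(A-B) - (c:ℂ)*(B-C)) ≠ 0 := by
      exact mul_ne_zero (by simpa using hbC) hd2
    rw [div_eq_div_iff
      (mul_ne_zero (mul_ne_zero hN2 hD1) (mul_ne_zero hN4 hD3))
      (mul_ne_zero (pow_ne_zero 2 hbC) hDen)]
    ring
  · rw [ha2, hb2, hc2]
    have hACc : (starRingEnd ℂ) (A - C) ≠ 0 := by
      rw [map_ne_zero]; exact sub_ne_zero.mpr hAC
    have hCAc : (starRingEnd ℂ) (C - A) ≠ 0 := by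
      rw [map_ne_zero]; exact hCA0
    have hbigc : (A-B) * (starRingEnd ℂ) (A-B) * (B-C)^2
        - (B-C) * (starRingEnd ℂ) (B-C) * (A-B)^2 ≠ 0 := by
      rw [← hc2, ← ha2]; exact hDen
    rw [map_div₀]
    rw [div_eq_div_iff (mul_ne_zero (mul_ne_zero hCA0 hCAc) hbigc) hACc]
    simp only [map_sub]
    ring
end

section
/- Let A, B, C be three non-collinear points in the Euclidean plane, with incenter I and excenter E_A opposite A. Then the four points B, C, I, E_A are concyclic, i.e., they lie on a common circle. -/
/-!
At the vertex `B`, the vectors `I - B` and `E_A - B` are multiples of `a • (A - B) + c • (C - B)`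
and `a • (A - B) - c • (C - B)`, where `‖A - B‖ = c` and `‖C - B‖ = a`: these are the internal and
external bisector directions at `B`, and they are orthogonal because `a • (A - B)` and
`c • (C - B)` have the same length `ac`. So `∠ I B E_A` is a right angle, and likewise
`∠ I C E_A`; by Thales' theorem `B` and `C` lie on the circle with diameter `I E_A`.
-/

open EuclideanGeometry InnerProductGeometry
open scoped InnerProductSpace Real

lemma inv_smul_weighted_sum_sub {k V : Type*} [Field k] [AddCommGroup V] [Module k V]
    {x y z : k} (hs : x + y + z ≠ 0) (A B C P : V) :
    (x + y + z)⁻¹ • (x • A + y • B + z • C) - P =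
      (x + y + z)⁻¹ • (x • (A - P) + y • (B - P) + z • (C - P)) := by
  rw [eq_inv_smul_iff₀ hs, smul_sub, smul_inv_smul₀ hs]
  module

lemma real_inner_norm_smul_add_norm_smul_sub_eq_zero {V : Type*}
    [NormedAddCommGroup V] [InnerProductSpace ℝ V] (u v : V) :
    ⟪‖v‖ • u + ‖u‖ • v, ‖v‖ • u - ‖u‖ • v⟫_ℝ = 0 :=
  (real_inner_add_sub_eq_zero_iff _ _).2 <| by
    rw [norm_smul, norm_smul, Real.norm_of_nonneg (norm_nonneg _),
      Real.norm_of_nonneg (norm_nonneg _), mul_comm]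

lemma dist_lt_dist_add_dist_of_not_collinear {V P : Type*} [NormedAddCommGroup V]
    [NormedSpace ℝ V] [StrictConvexSpace ℝ V] [MetricSpace P] [NormedAddTorsor V P]
    {A B C : P} (h : ¬ Collinear ℝ {A, B, C}) :
    dist B C < dist B A + dist A C :=
  dist_lt_dist_add_dist_iff.2 fun hw ↦ h <| by simpa [Set.insert_comm] using hw.collinear

section Triangle

variable (A B C : EuclideanSpace ℝ (Fin 2))

lemma incenterPt_swap : incenterPt A C B = incenterPt A B C := by
  rw [incenterPt, incenterPt, dist_comm C B, dist_comm B A, dist_comm A C, add_right_comm,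
    add_right_comm (_ • A)]

lemma excenterPt_swap : excenterPt A C B = excenterPt A B C := by
  rw [excenterPt, excenterPt, dist_comm C B, dist_comm B A, dist_comm A C, add_right_comm,
    add_right_comm (_ • A)]

lemma angle_incenterPt_excenterPt_eq_pi_div_two (h : ¬ Collinear ℝ {A, B, C}) :
    ∠ (incenterPt A B C) B (excenterPt A B C) = π / 2 := by
  have htri := dist_lt_dist_add_dist_of_not_collinear h
  rw [dist_comm B A, dist_comm A C] at htri
  have ht : -dist B C + dist C A + dist A B ≠ 0 := by linarith
  have hs : dist B C + dist C A + dist A B ≠ 0 := by linarith [dist_nonneg (x := B) (y := C)]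
  have hbis := real_inner_norm_smul_add_norm_smul_sub_eq_zero (A - B) (C - B)
  rw [← dist_eq_norm, ← dist_eq_norm, dist_comm C B] at hbis
  have hneg : (-dist B C) • (A - B) + dist A B • (C - B) =
      -(dist B C • (A - B) - dist A B • (C - B)) := by module
  rw [EuclideanGeometry.angle, ← inner_eq_zero_iff_angle_eq_pi_div_two, vsub_eq_sub, vsub_eq_sub,
    incenterPt, excenterPt, inv_smul_weighted_sum_sub hs, inv_smul_weighted_sum_sub ht]
  simp only [sub_self, smul_zero, add_zero]
  rw [hneg, real_inner_smul_left, real_inner_smul_right, inner_neg_right, hbis]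
  simp

end Triangle

/-- The points `B`, `C`, the incenter `I` and the excenter `E_A` opposite `A`
are concyclic. -/
theorem incenter_excenter_concyclic (A B C : EuclideanSpace ℝ (Fin 2))
    (h : AffineIndependent ℝ ![A, B, C]) :
    EuclideanGeometry.Concyclic
      ({B, C, incenterPt A B C, excenterPt A B C} : Set (EuclideanSpace ℝ (Fin 2))) := by
  have hABC : ¬ Collinear ℝ {A, B, C} := affineIndependent_iff_not_collinear_set.1 h
  have hB := angle_incenterPt_excenterPt_eq_pi_div_two A B C hABC
  have hC := angle_incenterPt_excenterPt_eq_pi_div_two A C B (by rwa [Set.pair_comm])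
  rw [incenterPt_swap, excenterPt_swap] at hC
  set I := incenterPt A B C
  set E := excenterPt A B C
  have hd := Sphere.isDiameter_ofDiameter I E
  refine ⟨cospherical_iff_exists_sphere.2 ⟨Sphere.ofDiameter I E, ?_⟩,
    coplanar_of_finrank_eq_two _ finrank_euclideanSpace_fin⟩
  simp only [Set.insert_subset_iff, Set.singleton_subset_iff, Sphere.mem_coe]
  exact ⟨Sphere.angle_eq_pi_div_two_iff_mem_sphere_ofDiameter.1 hB,
    Sphere.angle_eq_pi_div_two_iff_mem_sphere_ofDiameter.1 hC, hd.left_mem, hd.right_mem⟩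
end

section
/- Let A, B, C be three non-collinear points in the Euclidean plane, with incenter I and excenter E_A opposite A. Then dist(A,B) · dist(A,C) = dist(A,I) · dist(A,E_A). -/
/-!
Put `u = B - A`, `v = C - A`, `a = |BC|`, `b = |CA|`, `c = |AB|`. Both `I - A` and `E_A - A` are
multiples of the same vector `w = b • u + c • v`, namely `w / (a + b + c)` and `w / (b + c - a)`,
and expanding `‖w‖²` with `‖u - v‖ = a` gives `‖w‖² = b c ((b + c)² - a²)`. Hence
`|AI| · |AE_A| = ‖w‖² / ((b + c)² - a²) = b c`, the denominator being positive by the strict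
triangle inequality for the non-degenerate triangle.
-/

theorem norm_norm_smul_add_norm_smul_sq {V : Type*} [NormedAddCommGroup V] [InnerProductSpace ℝ V]
    (u v : V) :
    ‖‖v‖ • u + ‖u‖ • v‖ ^ 2 = ‖u‖ * ‖v‖ * ((‖u‖ + ‖v‖) ^ 2 - ‖u - v‖ ^ 2) := by
  rw [norm_add_sq_real, norm_sub_sq_real, real_inner_smul_left, real_inner_smul_right,
    norm_smul, norm_smul, norm_norm, norm_norm]
  ring

theorem dist_inv_smul_add_smul_add_smul {V : Type*} [NormedAddCommGroup V] [NormedSpace ℝ V]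
    (A B C : V) {x y z : ℝ} (hs : x + y + z ≠ 0) :
    dist A ((x + y + z)⁻¹ • (x • A + y • B + z • C)) =
      |x + y + z|⁻¹ * ‖y • (B - A) + z • (C - A)‖ := by
  have hvec : (x + y + z)⁻¹ • (x • A + y • B + z • C) - A =
      (x + y + z)⁻¹ • (y • (B - A) + z • (C - A)) := by
    rw [eq_inv_smul_iff₀ hs, smul_sub, smul_inv_smul₀ hs]
    module
  rw [dist_eq_norm', hvec, norm_smul, norm_inv, Real.norm_eq_abs]

theorem dist_lt_dist_add_dist_of_affineIndependent {V P : Type*} [NormedAddCommGroup V]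
    [NormedSpace ℝ V] [StrictConvexSpace ℝ V] [MetricSpace P] [NormedAddTorsor V P]
    {A B C : P} (h : AffineIndependent ℝ ![A, B, C]) :
    dist B C < dist B A + dist A C := by
  rw [dist_lt_dist_add_dist_iff]
  intro hbtw
  apply affineIndependent_iff_not_collinear_set.1 h
  rw [Set.insert_comm]
  exact hbtw.collinear

/-- The power-of-a-point identity `|AB|·|AC| = |AI|·|AE_A|`. -/
theorem dist_mul_dist_eq (A B C : EuclideanSpace ℝ (Fin 2))
    (h : AffineIndependent ℝ ![A, B, C]) :
    dist A B * dist A C = dist A (incenterPt A B C) * dist A (excenterPt A B C) := by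
  set w := dist C A • (B - A) + dist A B • (C - A)
  have htri : dist B C < dist C A + dist A B := by
    have := dist_lt_dist_add_dist_of_affineIndependent h
    rw [dist_comm B A, dist_comm A C] at this
    linarith
  have hs : 0 < dist B C + dist C A + dist A B := by linarith [dist_nonneg (x := B) (y := C)]
  have ht : 0 < -dist B C + dist C A + dist A B := by linarith
  have hw : ‖w‖ ^ 2 = dist A B * dist C A *
      ((dist B C + dist C A + dist A B) * (-dist B C + dist C A + dist A B)) := by
    have := norm_norm_smul_add_norm_smul_sq (B - A) (C - A)
    rw [sub_sub_sub_cancel_right, ← dist_eq_norm' A B, ← dist_eq_norm C A, ← dist_eq_norm B C]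
      at this
    rw [this]
    ring
  rw [incenterPt, excenterPt, dist_inv_smul_add_smul_add_smul A B C hs.ne',
    dist_inv_smul_add_smul_add_smul A B C ht.ne', abs_of_pos hs, abs_of_pos ht, dist_comm A C]
  field_simp
  linear_combination -hw
end

section
/- Let A, B, C be three non-collinear points in the Euclidean plane, with incenter I and excenter E_A opposite A. Then the inversion with center A and radius √(dist(A,B)·dist(A,C)) maps the incenter I to the excenter E_A (and hence maps E_A to I). -/
/-!
With `v = b • (B - A) + c • (C - A)`, a vector along the internal bisector at `A`, the two
centres are `I = A + v / (a + b + c)` and `E_A = A + v / (-a + b + c)`. The law of cosines gives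
`‖v‖² = b c (b + c + a)(b + c - a)`, i.e. `|AI| · |AE_A| = b c`, and on a ray from `A` this is
exactly the inversion in the circle of radius `√(b c)`. Non-collinearity gives the strict triangle
inequality `a < b + c`, so both weight sums are positive.
-/

open EuclideanGeometry

theorem inv_smul_add_smul_add_smul_eq {K V : Type*} [Field K] [AddCommGroup V] [Module K V]
    {α β γ : K} (h : α + β + γ ≠ 0) (A B C : V) :
    (α + β + γ)⁻¹ • (α • A + β • B + γ • C) =
      (α + β + γ)⁻¹ • (β • (B - A) + γ • (C - A)) + A := by
  have hsplit : α • A + β • B + γ • C = β • (B - A) + γ • (C - A) + (α + β + γ) • A := by module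
  rw [hsplit, smul_add, inv_smul_smul₀ h]

theorem norm_sq_norm_smul_add_norm_smul {V : Type*} [NormedAddCommGroup V]
    [InnerProductSpace ℝ V] (u w : V) :
    ‖‖w‖ • u + ‖u‖ • w‖ ^ 2 = ‖u‖ * ‖w‖ * ((‖u‖ + ‖w‖) ^ 2 - ‖u - w‖ ^ 2) := by
  rw [norm_add_sq_real, norm_sub_sq_real, norm_smul, norm_smul, real_inner_smul_left,
    real_inner_smul_right, Real.norm_eq_abs, Real.norm_eq_abs, abs_norm, abs_norm]
  ring

theorem inversion_inv_smul_vadd {V P : Type*} [NormedAddCommGroup V] [InnerProductSpace ℝ V]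
    [MetricSpace P] [NormedAddTorsor V P] (c : P) {R s t : ℝ} {v : V}
    (hv : ‖v‖ ^ 2 = R ^ 2 * s * t) :
    inversion c R (s⁻¹ • v +ᵥ c) = t⁻¹ • v +ᵥ c := by
  rcases eq_or_ne v 0 with rfl | hv0
  · simp
  have hRst : R ^ 2 * s * t ≠ 0 := by rw [← hv]; positivity
  have hR : R ≠ 0 := by rintro rfl; simp at hRst
  have hs : s ≠ 0 := by rintro rfl; simp at hRst
  rw [inversion, dist_vadd_left, norm_smul, vadd_vsub, smul_smul, div_pow, mul_pow, hv]
  congr 1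
  rw [Real.norm_eq_abs, sq_abs]
  field_simp

/-- The inversion with center `A` and radius `√(|AB|·|AC|)` maps the incenter `I`
to the excenter `E_A` opposite `A` (and hence `E_A` to `I`). -/
theorem inversion_incenter_eq_excenter (A B C : EuclideanSpace ℝ (Fin 2))
    (h : AffineIndependent ℝ ![A, B, C]) :
    inversion A (Real.sqrt (dist A B * dist A C)) (incenterPt A B C) = excenterPt A B C := by
  have hBAC : dist B C < dist B A + dist A C :=
    dist_lt_dist_add_dist_iff.2 (by simpa using h.not_wbtw_of_injective 1 0 2 (by decide))
  rw [dist_comm B A, dist_comm A C] at hBAC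
  have ht : 0 < -dist B C + dist C A + dist A B := by linarith
  have hs : 0 < dist B C + dist C A + dist A B := by linarith [dist_nonneg (x := B) (y := C)]
  rw [incenterPt, excenterPt, inv_smul_add_smul_add_smul_eq hs.ne',
    inv_smul_add_smul_add_smul_eq ht.ne']
  apply inversion_inv_smul_vadd
  have hv := norm_sq_norm_smul_add_norm_smul (B - A) (C - A)
  rw [← dist_eq_norm, ← dist_eq_norm, ← dist_eq_norm, dist_sub_right, dist_comm B A] at hv
  rw [dist_comm A C, hv, Real.sq_sqrt (by positivity)]
  ring
end

section
/- Let A, B, C be three non-collinear points in the Euclidean plane with incenter I, and let I₂ be the inversion with center A and radius √(dist(A,B)·dist(A,C)). Then I₂(B) is the reflection of C across the line through A and I (the internal angle bisector at A), and I₂(C) is the reflection of B across that line. -/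
/-!
Inversion at `A` with `R² = |AB|·|AC|` sends `B` to the point `B'` of ray `AB` with
`|AB'| = |AC|`. The incenter satisfies `I - A ∝ |AC|(B - A) + |AB|(C - A) ∝ (B' - A) + (C - A)`,
so the bisector `AI` is spanned by the sum of two vectors of equal length `|AC|`; reflection in
that line swaps them, since their difference is orthogonal to their sum.
-/

open EuclideanGeometry

theorem Submodule.reflection_eq_of_add_mem_of_sub_mem_orthogonal {E : Type*}
    [NormedAddCommGroup E] [InnerProductSpace ℝ E] {K : Submodule ℝ E}
    [K.HasOrthogonalProjection] {v w : E} (hadd : v + w ∈ K) (hsub : v - w ∈ Kᗮ) :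
    K.reflection v = w := by
  have hv : v = (2 : ℝ)⁻¹ • ((v + w) + (v - w)) := by module
  rw [hv, map_smul, map_add, K.reflection_mem_subspace_eq_self hadd,
    K.reflection_mem_subspace_orthogonalComplement_eq_neg hsub]
  module

section EuclideanAffine

variable {V P : Type*} [NormedAddCommGroup V] [InnerProductSpace ℝ V] [MetricSpace P]
  [NormedAddTorsor V P]

theorem EuclideanGeometry.inversion_sqrt_mul_dist {A B : P} (hAB : A ≠ B) {r : ℝ}
    (hr : 0 ≤ r) :
    inversion A (√(dist A B * r)) B = (r / dist A B) • (B -ᵥ A) +ᵥ A := by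
  have hpos : 0 < dist A B := dist_pos.2 hAB
  rw [inversion, dist_comm B A, div_pow, Real.sq_sqrt (by positivity), sq,
    mul_div_mul_left _ _ hpos.ne']

theorem EuclideanGeometry.reflection_vadd_eq_vadd_of_norm_eq {s : AffineSubspace ℝ P}
    [Nonempty s] [s.direction.HasOrthogonalProjection] {p : P} (hp : p ∈ s) {v w : V}
    (hvw : ‖v‖ = ‖w‖) (hs : s.direction = ℝ ∙ (v + w)) :
    reflection s (v +ᵥ p) = w +ᵥ p := by
  have hadd : v + w ∈ s.direction := hs ▸ Submodule.mem_span_singleton_self _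
  have hsub : v - w ∈ s.directionᗮ := by
    rw [hs, Submodule.mem_orthogonal_singleton_iff_inner_right]
    exact (real_inner_add_sub_eq_zero_iff v w).2 hvw
  rw [reflection_apply_of_mem s _ hp, vadd_vsub,
    Submodule.reflection_eq_of_add_mem_of_sub_mem_orthogonal hadd hsub]

end EuclideanAffine

theorem incenterPt_comm (A B C : EuclideanSpace ℝ (Fin 2)) :
    incenterPt A B C = incenterPt A C B := by
  unfold incenterPt
  rw [dist_comm C B, dist_comm B A, dist_comm A C]
  congr 1
  · ring
  · abel

theorem incenterPt_vsub_left {A B C : EuclideanSpace ℝ (Fin 2)}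
    (h : dist B C + dist C A + dist A B ≠ 0) :
    incenterPt A B C -ᵥ A = (dist B C + dist C A + dist A B)⁻¹ •
      (dist C A • (B -ᵥ A) + dist A B • (C -ᵥ A)) := by
  simp only [incenterPt, vsub_eq_sub]
  match_scalars <;> field_simp
  ring

theorem inversion_eq_reflection_incenterPt {A B C : EuclideanSpace ℝ (Fin 2)} (hAB : A ≠ B) :
    inversion A (√(dist A B * dist A C)) B = reflection line[ℝ, A, incenterPt A B C] C := by
  have hc : 0 < dist A B := dist_pos.2 hAB
  set v := (dist A C / dist A B) • (B -ᵥ A)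
  have hnorm : ‖C -ᵥ A‖ = ‖v‖ := by
    rw [norm_smul, ← dist_eq_norm_vsub, ← dist_eq_norm_vsub, Real.norm_of_nonneg (by positivity),
      dist_comm C A, dist_comm B A, div_mul_cancel₀ _ hc.ne']
  have hsum : dist B C + dist C A + dist A B ≠ 0 := by positivity
  have hdir : line[ℝ, A, incenterPt A B C].direction = ℝ ∙ (C -ᵥ A + v) := by
    have hI : incenterPt A B C -ᵥ A =
        (dist A B / (dist B C + dist C A + dist A B)) • (C -ᵥ A + v) := by
      rw [incenterPt_vsub_left hsum, dist_comm C A]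
      match_scalars <;> field_simp
    rw [direction_affineSpan, vectorSpan_pair_rev, hI,
      Submodule.span_singleton_smul_eq (by simp [hAB, hsum])]
  rw [inversion_sqrt_mul_dist hAB dist_nonneg,
    ← reflection_vadd_eq_vadd_of_norm_eq (left_mem_affineSpan_pair ℝ _ _) hnorm hdir, vsub_vadd]

/-- The inversion `I₂` centered at `A` with radius `√(|AB|·|AC|)` swaps `B` and `C`
up to reflection in the internal angle bisector at `A` (the line through `A` and the
incenter `I`): `I₂(B)` is the reflection of `C` and `I₂(C)` is the reflection of `B`. -/
theorem inversion_swaps_vertices_up_to_reflection (A B C : EuclideanSpace ℝ (Fin 2))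
    (h : AffineIndependent ℝ ![A, B, C]) :
    inversion A (Real.sqrt (dist A B * dist A C)) B =
      EuclideanGeometry.reflection (line[ℝ, A, incenterPt A B C]) C ∧
    inversion A (Real.sqrt (dist A B * dist A C)) C =
      EuclideanGeometry.reflection (line[ℝ, A, incenterPt A B C]) B := by
  have hAB : A ≠ B := by simpa using h.injective.ne (show (0 : Fin 3) ≠ 1 by decide)
  have hAC : A ≠ C := by simpa using h.injective.ne (show (0 : Fin 3) ≠ 2 by decide)
  refine ⟨inversion_eq_reflection_incenterPt hAB, ?_⟩
  rw [incenterPt_comm, mul_comm]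
  exact inversion_eq_reflection_incenterPt hAC
end

section
/- Let A, B, C be three non-collinear points in the Euclidean plane, with incenter I and excenters E_A, E_B, E_C. Then the four points I, E_A, E_B, E_C are not concyclic and no single line contains all of them; in particular they are themselves the vertices of a non-degenerate quadruplet (this is the planar form of the corollary that the dual quadruplet is never cocircular). -/
set_option maxHeartbeats 1000000

open RealInnerProductSpace

lemma smul_cancel {k : ℝ} (hk : k ≠ 0) {x y : EuclideanSpace ℝ (Fin 2)}
    (h : k • x = k • y) : x = y :=
  smul_right_injective _ hk h

/-- Power of a point on a chord line with respect to a sphere. -/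
lemma power_aux {F : Type*} [NormedAddCommGroup F] [InnerProductSpace ℝ F]
    (X Y Z P : F) (r t : ℝ) (hX : ‖X - P‖ = r) (hY : ‖Y - P‖ = r)
    (hZ : Z - X = t • (Y - X)) :
    ⟪Z - X, Z - Y⟫ = ‖Z - P‖ ^ 2 - r ^ 2 := by
  have hZY : Z - Y = (t - 1) • (Y - X) := by
    rw [show Z - Y = (Z - X) - (Y - X) from by abel, hZ]; module
  have hZP : Z - P = (X - P) + t • (Y - X) := by
    rw [show Z - P = (Z - X) + (X - P) from by abel, hZ]; abel
  have hYP : Y - P = (X - P) + (Y - X) := by abel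
  have h1 : ⟪Z - X, Z - Y⟫ = t * (t - 1) * ‖Y - X‖ ^ 2 := by
    rw [hZ, hZY, real_inner_smul_left, real_inner_smul_right, real_inner_self_eq_norm_sq]; ring
  have h2 : ‖Z - P‖ ^ 2
      = ‖X - P‖ ^ 2 + 2 * (t * ⟪X - P, Y - X⟫) + t ^ 2 * ‖Y - X‖ ^ 2 := by
    rw [hZP, norm_add_sq_real, real_inner_smul_right, norm_smul, Real.norm_eq_abs, mul_pow,
      sq_abs]
  have h3 : r ^ 2 = ‖X - P‖ ^ 2 + 2 * ⟪X - P, Y - X⟫ + ‖Y - X‖ ^ 2 := by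
    rw [← hY, hYP, norm_add_sq_real]
  have h4 : ‖X - P‖ ^ 2 = r ^ 2 := by rw [hX]
  rw [h1, h2, h4]
  linear_combination t * h3 + t * h4

/-- The dual quadruplet is never degenerate: the incenter and the three excenters
are neither concyclic nor collinear. -/
theorem dual_not_concyclic_not_collinear (A B C : EuclideanSpace ℝ (Fin 2))
    (h : AffineIndependent ℝ ![A, B, C])
    (I : EuclideanSpace ℝ (Fin 2)) (hI : I = incenterPt A B C)
    (EA : EuclideanSpace ℝ (Fin 2)) (hEA : EA = excenterPt A B C)
    (EB : EuclideanSpace ℝ (Fin 2)) (hEB : EB = excenterPt B C A)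
    (EC : EuclideanSpace ℝ (Fin 2)) (hEC : EC = excenterPt C A B) :
    ¬ EuclideanGeometry.Cospherical ({I, EA, EB, EC} : Set (EuclideanSpace ℝ (Fin 2))) ∧
    ¬ Collinear ℝ ({I, EA, EB, EC} : Set (EuclideanSpace ℝ (Fin 2))) := by
  have ncol : ¬ Collinear ℝ ({A, B, C} : Set (EuclideanSpace ℝ (Fin 2))) :=
    affineIndependent_iff_not_collinear_set.mp h
  simp only [incenterPt] at hI
  simp only [excenterPt] at hEA hEB hEC
  set a : ℝ := dist B C with hadef
  set b : ℝ := dist C A with hbdef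
  set c : ℝ := dist A B with hcdef
  -- basic positivity
  have hBC : B ≠ C := by
    intro hq
    have h12 := h.injective (a₁ := 1) (a₂ := 2) (by simpa using hq)
    exact absurd h12 (by decide)
  have hCA : C ≠ A := by
    intro hq
    have h12 := h.injective (a₁ := 2) (a₂ := 0) (by simpa using hq)
    exact absurd h12 (by decide)
  have hAB : A ≠ B := by
    intro hq
    have h12 := h.injective (a₁ := 0) (a₂ := 1) (by simpa using hq)
    exact absurd h12 (by decide)
  have ha : 0 < a := dist_pos.mpr hBC
  have hb : 0 < b := dist_pos.mpr hCA
  have hc : 0 < c := dist_pos.mpr hAB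
  -- strict triangle inequalities
  have tri1 : a < b + c := by
    have h1 : a ≤ c + b := by
      have := dist_triangle B A C
      rw [dist_comm B A, dist_comm A C] at this
      exact this
    rcases eq_or_lt_of_le h1 with hEq | hlt
    · exfalso
      apply ncol
      have hw : Wbtw ℝ B A C := dist_add_dist_eq_iff.mp
        (by rw [dist_comm B A, dist_comm A C]; linarith)
      exact hw.collinear.subset (by intro x hx; simp at hx ⊢; tauto)
    · linarith
  have tri2 : b < a + c := by
    have h1 : b ≤ a + c := by
      have := dist_triangle C B A
      rw [dist_comm C B, dist_comm B A] at this
      exact this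
    rcases eq_or_lt_of_le h1 with hEq | hlt
    · exfalso
      apply ncol
      have hw : Wbtw ℝ C B A := dist_add_dist_eq_iff.mp
        (by rw [dist_comm C B, dist_comm B A]; linarith)
      exact hw.collinear.subset (by intro x hx; simp at hx ⊢; tauto)
    · linarith
  have tri3 : c < a + b := by
    have h1 : c ≤ b + a := by
      have := dist_triangle A C B
      rw [dist_comm A C, dist_comm C B] at this
      exact this
    rcases eq_or_lt_of_le h1 with hEq | hlt
    · exfalso
      apply ncol
      have hw : Wbtw ℝ A C B := dist_add_dist_eq_iff.mp
        (by rw [dist_comm A C, dist_comm C B]; linarith)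
      exact hw.collinear.subset (by intro x hx; simp at hx ⊢; tauto)
    · linarith
  -- scaled forms of the definitions
  have key : ∀ (k : ℝ) (v X : EuclideanSpace ℝ (Fin 2)), k ≠ 0 → X = k⁻¹ • v → k • X = v := by
    intro k v X hk hX
    rw [hX, smul_smul, mul_inv_cancel₀ hk, one_smul]
  have hI' : (a + b + c) • I = a • A + b • B + c • C :=
    key _ _ _ (by positivity) hI
  have hEA' : (-a + b + c) • EA = (-a) • A + b • B + c • C :=
    key _ _ _ (by intro hq; linarith) hEA
  have hEB' : (-b + c + a) • EB = (-b) • B + c • C + a • A :=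
    key _ _ _ (by intro hq; linarith) hEB
  have hEC' : (-c + a + b) • EC = (-c) • C + a • A + b • B :=
    key _ _ _ (by intro hq; linarith) hEC
  have h2a : (2 * a) ≠ 0 := by positivity
  -- key vector identities
  have eIA : A - I = ((a - b - c) / (2 * a)) • (EA - I) := by
    apply smul_cancel h2a
    rw [smul_smul, show (2 * a) * ((a - b - c) / (2 * a)) = a - b - c from by field_simp]
    
    linear_combination (norm := module) hEA' - hI'
  have eIB : B - I = ((b - a - c) / (2 * b)) • (EB - I) := by
    apply smul_cancel (show (2 * b) ≠ 0 by positivity)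
    rw [smul_smul, show (2 * b) * ((b - a - c) / (2 * b)) = b - a - c from by field_simp]
    linear_combination (norm := module) hEB' - hI'
  have eIC : C - I = ((c - a - b) / (2 * c)) • (EC - I) := by
    apply smul_cancel (show (2 * c) ≠ 0 by positivity)
    rw [smul_smul, show (2 * c) * ((c - a - b) / (2 * c)) = c - a - b from by field_simp]
    linear_combination (norm := module) hEC' - hI'
  have eBCA : A - EB = ((a + b - c) / (2 * a)) • (EC - EB) := by
    apply smul_cancel h2a
    rw [smul_smul, show (2 * a) * ((a + b - c) / (2 * a)) = a + b - c from by field_simp]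
    linear_combination (norm := module) - hEB' - hEC'
  -- the incenter differs from the `A`-excenter
  have hAI_ne : EA ≠ I := by
    intro hq
    have hA : A = I := by
      have h5 := eIA
      rw [hq, sub_self, smul_zero, sub_eq_zero] at h5
      exact h5
    apply ncol
    have h5 := hI'
    rw [← hA] at h5
    have hrel : (b + c) • (A - B) = c • (C - B) := by
      linear_combination (norm := module) h5
    rw [collinear_iff_exists_forall_eq_smul_vadd]
    refine ⟨B, C - B, ?_⟩
    intro p hp
    simp only [Set.mem_insert_iff, Set.mem_singleton_iff] at hp
    rcases hp with rfl | rfl | rfl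
    · refine ⟨c / (b + c), ?_⟩
      rw [vadd_eq_add, ← sub_eq_iff_eq_add]
      apply smul_cancel (show (b + c) ≠ 0 by positivity)
      rw [smul_smul, show (b + c) * (c / (b + c)) = c from by field_simp]
      exact hrel
    · exact ⟨0, by simp⟩
    · exact ⟨1, by rw [vadd_eq_add, one_smul, sub_add_cancel]⟩
  -- the two other excenters differ
  have hBCex_ne : EB ≠ EC := by
    intro hq
    have hA : A = EB := by
      have h5 := eBCA
      rw [← hq, sub_self, smul_zero, sub_eq_zero] at h5
      exact h5
    apply ncol
    have h5 := hEB'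
    rw [← hA] at h5
    rw [collinear_iff_exists_forall_eq_smul_vadd]
    refine ⟨A, B - A, ?_⟩
    intro p hp
    simp only [Set.mem_insert_iff, Set.mem_singleton_iff] at hp
    rcases hp with rfl | rfl | rfl
    · exact ⟨0, by simp⟩
    · exact ⟨1, by rw [vadd_eq_add, one_smul, sub_add_cancel]⟩
    · refine ⟨b / c, ?_⟩
      rw [vadd_eq_add, ← sub_eq_iff_eq_add]
      apply smul_cancel (show c ≠ 0 by positivity)
      rw [smul_smul, show c * (b / c) = b from by field_simp]
      linear_combination (norm := module) - h5
  have hnEA : (0:ℝ) < ‖EA - I‖ := by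
    rw [norm_pos_iff]
    exact sub_ne_zero_of_ne hAI_ne
  have hnBC : (0:ℝ) < ‖EC - EB‖ := by
    rw [norm_pos_iff]
    intro hq
    exact hBCex_ne (sub_eq_zero.mp hq).symm
  -- the power of `A` along the chord `I EA` is positive
  have hpos : 0 < ⟪A - I, A - EA⟫ := by
    have hAEA : A - EA = ((a - b - c) / (2 * a) - 1) • (EA - I) := by
      rw [show A - EA = (A - I) - (EA - I) from by abel, eIA]; module
    rw [eIA, hAEA, real_inner_smul_left, real_inner_smul_right, real_inner_self_eq_norm_sq]
    have h7 : (a - b - c) / (2 * a) < 0 := div_neg_of_neg_of_pos (by linarith) (by linarith)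
    have h9 : 0 < (-((a - b - c) / (2 * a))) * ((1 - (a - b - c) / (2 * a)) * ‖EA - I‖ ^ 2) :=
      mul_pos (by linarith) (mul_pos (by linarith) (pow_pos hnEA 2))
    nlinarith [h9]
  -- the power of `A` along the chord `EB EC` is negative
  have hneg : ⟪A - EB, A - EC⟫ < 0 := by
    have hAEC : A - EC = ((a + b - c) / (2 * a) - 1) • (EC - EB) := by
      rw [show A - EC = (A - EB) - (EC - EB) from by abel, eBCA]; module
    rw [eBCA, hAEC, real_inner_smul_left, real_inner_smul_right, real_inner_self_eq_norm_sq]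
    have h7 : 0 < (a + b - c) / (2 * a) := div_pos (by linarith) (by linarith)
    have h8 : (a + b - c) / (2 * a) - 1 < 0 := by
      rw [sub_neg, div_lt_one (by linarith)]
      linarith
    have h9 : 0 < ((a + b - c) / (2 * a)) * ((1 - (a + b - c) / (2 * a)) * ‖EC - EB‖ ^ 2) :=
      mul_pos h7 (mul_pos (by linarith) (pow_pos hnBC 2))
    nlinarith [h9]
  constructor
  · intro hsph
    obtain ⟨P, r, hP⟩ := (EuclideanGeometry.cospherical_def _).mp hsph
    have dI : ‖I - P‖ = r := by rw [← dist_eq_norm]; exact hP I (by simp)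
    have dEA : ‖EA - P‖ = r := by rw [← dist_eq_norm]; exact hP EA (by simp)
    have dEB : ‖EB - P‖ = r := by rw [← dist_eq_norm]; exact hP EB (by simp)
    have dEC : ‖EC - P‖ = r := by rw [← dist_eq_norm]; exact hP EC (by simp)
    have p1 := power_aux I EA A P r _ dI dEA eIA
    have p2 := power_aux EB EC A P r _ dEB dEC eBCA
    linarith
  · intro hcol4
    obtain ⟨p₀, v, hv⟩ := (collinear_iff_exists_forall_eq_smul_vadd _).mp hcol4
    obtain ⟨rI, hrI⟩ := hv I (by simp)
    obtain ⟨rA, hrA⟩ := hv EA (by simp)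
    obtain ⟨rB, hrB⟩ := hv EB (by simp)
    obtain ⟨rC, hrC⟩ := hv EC (by simp)
    apply ncol
    rw [collinear_iff_exists_forall_eq_smul_vadd]
    refine ⟨I, v, ?_⟩
    intro p hp
    simp only [Set.mem_insert_iff, Set.mem_singleton_iff] at hp
    have hEAI : EA - I = (rA - rI) • v := by
      rw [hrA, hrI, vadd_eq_add, vadd_eq_add]; module
    have hEBI : EB - I = (rB - rI) • v := by
      rw [hrB, hrI, vadd_eq_add, vadd_eq_add]; module
    have hECI : EC - I = (rC - rI) • v := by
      rw [hrC, hrI, vadd_eq_add, vadd_eq_add]; module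
    rcases hp with rfl | rfl | rfl
    · refine ⟨(a - b - c) / (2 * a) * (rA - rI), ?_⟩
      rw [vadd_eq_add, ← sub_eq_iff_eq_add, eIA, hEAI, smul_smul]
    · refine ⟨(b - a - c) / (2 * b) * (rB - rI), ?_⟩
      rw [vadd_eq_add, ← sub_eq_iff_eq_add, eIB, hEBI, smul_smul]
    · refine ⟨(c - a - b) / (2 * c) * (rC - rI), ?_⟩
      rw [vadd_eq_add, ← sub_eq_iff_eq_add, eIC, hECI, smul_smul]
end
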